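/- Let 0 < s < 2. The integral I_s := ∫₀^∞ τ^{−1−s/2} (1 − Θ(1,τ)) dτ is finite and strictly positive, and for every a > 0: ∫₀^∞ t^{−1−s/2} (1 − Θ(a,t)) dt = I_s · a^{−s}. (In particular, in the half space the fractional Dirichlet Laplacian applied to the constant 1 equals a constant multiple of d(x)^{−s} = x_d^{−s}.) -/

import Mathlib

/-!
With `c = (2π)^{-1/2}` and the Gaussian tail `G x = ∫_x^∞ e^{-ξ²/2} dξ`, one has
`1 - Θ(a,t) = 2c G(a/√(2t))`, so `Θ(a,t)` depends only on `a²/t` and the substitution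
`t = a²τ` turns `∫₀^∞ t^p (1 - Θ(a,t)) dt` into `a^{2p+2}` times the same integral at `a = 1`;
for `p = -1 - s/2` this factor is `a^{-s}`.
The integral at `a = 1` converges for every `p < -1`: at infinity `0 < 1 - Θ ≤ 1`, and near `0`
the bound `G x ≤ e^{-x²/2}/x` makes `1 - Θ(1,τ)` vanish faster than any power of `τ`.
-/

open MeasureTheory Real Set

/-- `Θ(a,t) = (2π)^{−1/2} ∫_{−a/√(2t)}^{a/√(2t)} e^{−ξ²/2} dξ`: the half-space Dirichlet heat
semigroup applied to the constant function `1`, at a point at distance `a` from the boundary. -/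
noncomputable def Theta (a t : ℝ) : ℝ :=
  (2 * π) ^ (-(1 : ℝ) / 2) *
    ∫ ξ in (-(a / Real.sqrt (2 * t)))..(a / Real.sqrt (2 * t)), Real.exp (-ξ ^ 2 / 2)

open scoped Nat

variable {a c p t x : ℝ}

noncomputable def gaussTail (x : ℝ) : ℝ := ∫ ξ in Ioi x, exp (-ξ ^ 2 / 2)

lemma exp_neg_sq_div_two_eq (ξ : ℝ) : exp (-ξ ^ 2 / 2) = exp (-(1 / 2) * ξ ^ 2) := by
  ring_nf

lemma integrable_exp_neg_sq_div_two : Integrable fun ξ : ℝ => exp (-ξ ^ 2 / 2) := by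
  simpa only [exp_neg_sq_div_two_eq] using integrable_exp_neg_mul_sq (b := 1 / 2) (by norm_num)

lemma integral_exp_neg_sq_div_two : ∫ ξ : ℝ, exp (-ξ ^ 2 / 2) = √(2 * π) := by
  simp only [exp_neg_sq_div_two_eq, integral_gaussian]
  congr 1; ring

lemma integrable_mul_exp_neg_sq_div_two : Integrable fun ξ : ℝ => ξ * exp (-ξ ^ 2 / 2) := by
  simpa only [exp_neg_sq_div_two_eq] using integrable_mul_exp_neg_mul_sq (b := 1 / 2) (by norm_num)

lemma gaussTail_pos (x : ℝ) : 0 < gaussTail x := by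
  rw [gaussTail, setIntegral_pos_iff_support_of_nonneg_ae
    (.of_forall fun ξ => (exp_pos _).le) integrable_exp_neg_sq_div_two.integrableOn]
  simp [Function.support, exp_ne_zero]

lemma integral_Ioi_mul_exp_neg_sq_div_two (x : ℝ) :
    ∫ ξ in Ioi x, ξ * exp (-ξ ^ 2 / 2) = exp (-x ^ 2 / 2) := by
  have hderiv (ξ : ℝ) : HasDerivAt (fun u : ℝ => -exp (-u ^ 2 / 2)) (ξ * exp (-ξ ^ 2 / 2)) ξ := by
    have hsq : HasDerivAt (fun u : ℝ => -u ^ 2 / 2) (-ξ) ξ := by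
      refine ((hasDerivAt_pow 2 ξ).neg.div_const 2).congr_deriv ?_
      norm_num
      ring
    refine hsq.exp.neg.congr_deriv ?_
    ring
  have hlim : Filter.Tendsto (fun u : ℝ => -exp (-u ^ 2 / 2)) Filter.atTop (nhds (-0)) := by
    refine (tendsto_exp_atBot.comp ?_).neg
    simpa only [neg_div, Function.comp_def] using Filter.tendsto_neg_atTop_atBot.comp
      ((Filter.tendsto_pow_atTop two_ne_zero).atTop_div_const (two_pos : (0 : ℝ) < 2))
  rw [integral_Ioi_of_hasDerivAt_of_tendsto' (fun ξ _ => hderiv ξ)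
    integrable_mul_exp_neg_sq_div_two.integrableOn hlim]
  ring

lemma gaussTail_le (hx : 0 < x) : gaussTail x ≤ exp (-x ^ 2 / 2) / x := by
  calc gaussTail x ≤ ∫ ξ in Ioi x, ξ * exp (-ξ ^ 2 / 2) / x := by
        refine setIntegral_mono_on integrable_exp_neg_sq_div_two.integrableOn ?_
          measurableSet_Ioi fun ξ hξ => ?_
        · exact (integrable_mul_exp_neg_sq_div_two.div_const x).integrableOn
        · rw [le_div_iff₀ hx, mul_comm]
          gcongr
          exact hξ.le
    _ = exp (-x ^ 2 / 2) / x := by rw [integral_div, integral_Ioi_mul_exp_neg_sq_div_two]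

lemma intervalIntegral_add_two_mul_gaussTail (hx : 0 ≤ x) :
    (∫ ξ in -x..x, exp (-ξ ^ 2 / 2)) + 2 * gaussTail x = √(2 * π) := by
  have hint := integrable_exp_neg_sq_div_two
  have hleft : ∫ ξ in Iic (-x), exp (-ξ ^ 2 / 2) = gaussTail x := by
    rw [gaussTail, ← integral_comp_neg_Ioi]
    simp only [neg_sq]
  have hright : ∫ ξ in Ioi (-x), exp (-ξ ^ 2 / 2)
      = (∫ ξ in -x..x, exp (-ξ ^ 2 / 2)) + gaussTail x := by
    rw [intervalIntegral.integral_of_le (by linarith), gaussTail,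
      ← setIntegral_union (Ioc_disjoint_Ioi le_rfl) measurableSet_Ioi hint.integrableOn
        hint.integrableOn, Ioc_union_Ioi_eq_Ioi (by linarith)]
  rw [← integral_exp_neg_sq_div_two, ← intervalIntegral.integral_Iic_add_Ioi hint.integrableOn
    hint.integrableOn, hleft, hright]
  ring

lemma rpow_neg_half_mul_sqrt {y : ℝ} (hy : 0 < y) : y ^ (-(1 : ℝ) / 2) * √y = 1 := by
  rw [sqrt_eq_rpow, ← rpow_add hy]
  norm_num

lemma one_sub_Theta (ha : 0 ≤ a) (t : ℝ) :
    1 - Theta a t = 2 * (2 * π) ^ (-(1 : ℝ) / 2) * gaussTail (a / √(2 * t)) := by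
  have h := intervalIntegral_add_two_mul_gaussTail (x := a / √(2 * t)) (by positivity)
  have hc := rpow_neg_half_mul_sqrt (y := 2 * π) (by positivity)
  rw [Theta]
  linear_combination -(2 * π) ^ (-(1 : ℝ) / 2) * h - hc

lemma Theta_lt_one (ha : 0 ≤ a) (t : ℝ) : Theta a t < 1 := by
  rw [← sub_pos, one_sub_Theta ha t]
  exact mul_pos (by positivity) (gaussTail_pos _)

lemma Theta_nonneg (ha : 0 ≤ a) (t : ℝ) : 0 ≤ Theta a t := by
  have hx : 0 ≤ a / √(2 * t) := by positivity
  exact mul_nonneg (by positivity)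
    (intervalIntegral.integral_nonneg (by linarith) fun _ _ => (exp_pos _).le)

lemma Theta_mul_mul_sq (hc : 0 < c) (a t : ℝ) : Theta (c * a) (c ^ 2 * t) = Theta a t := by
  have hsqrt : √(2 * (c ^ 2 * t)) = c * √(2 * t) := by
    rw [mul_left_comm, sqrt_mul (by positivity), sqrt_sq hc.le]
  rw [Theta, Theta, hsqrt, mul_div_mul_left _ _ hc.ne']

lemma continuous_intervalIntegral_neg_self {f : ℝ → ℝ} (hf : Continuous f) :
    Continuous fun x => ∫ ξ in -x..x, f ξ := by
  have hprim := intervalIntegral.continuous_primitive (μ := volume)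
    (fun a b => hf.intervalIntegrable a b) 0
  refine (hprim.sub (hprim.comp continuous_neg)).congr fun x => ?_
  exact intervalIntegral.integral_interval_sub_left (hf.intervalIntegrable _ _)
    (hf.intervalIntegrable _ _)

lemma measurable_Theta (a : ℝ) : Measurable (Theta a) := by
  have hx : Measurable fun t : ℝ => a / √(2 * t) := by fun_prop
  exact ((continuous_intervalIntegral_neg_self (by fun_prop)).measurable.comp hx).const_mul _

lemma exp_neg_le_factorial_div_pow {y : ℝ} (hy : 0 < y) (n : ℕ) : exp (-y) ≤ n ! / y ^ n := by
  rw [exp_neg, inv_le_comm₀ (exp_pos y) (by positivity), inv_div]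
  exact pow_div_factorial_le_exp _ hy.le n

lemma one_sub_Theta_one_le (n : ℕ) (ht0 : 0 < t) (ht1 : t ≤ 1) :
    1 - Theta 1 t ≤ 4 * n ! * (4 * t) ^ n := by
  set x := 1 / √(2 * t) with hx_def
  have hx : 0 < x := by positivity
  have hc : (2 * π) ^ (-(1 : ℝ) / 2) ≤ 1 :=
    rpow_le_one_of_one_le_of_nonpos (by nlinarith [pi_gt_three]) (by norm_num)
  have hexp : exp (-x ^ 2 / 2) ≤ n ! * (4 * t) ^ n := by
    have hx2 : x ^ 2 / 2 = 1 / (4 * t) := by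
      rw [hx_def, div_pow, sq_sqrt (by positivity)]
      field_simp
      ring
    calc exp (-x ^ 2 / 2) ≤ n ! / (1 / (4 * t)) ^ n := by
          rw [neg_div, hx2]
          exact exp_neg_le_factorial_div_pow (by positivity) n
      _ = n ! * (4 * t) ^ n := by rw [one_div, inv_pow, div_inv_eq_mul]
  have hsqrt_le : √(2 * t) ≤ 2 := sqrt_le_iff.mpr ⟨by norm_num, by linarith⟩
  calc 1 - Theta 1 t = 2 * (2 * π) ^ (-(1 : ℝ) / 2) * gaussTail x := one_sub_Theta zero_le_one t
    _ ≤ 2 * 1 * (exp (-x ^ 2 / 2) / x) := by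
        gcongr
        · exact (gaussTail_pos x).le
        · exact gaussTail_le hx
    _ = 2 * exp (-x ^ 2 / 2) * √(2 * t) := by rw [hx_def]; field_simp
    _ ≤ 2 * (n ! * (4 * t) ^ n) * 2 := by gcongr
    _ = 4 * n ! * (4 * t) ^ n := by ring

lemma measurable_rpow_mul_one_sub_Theta (p a : ℝ) :
    Measurable fun t => t ^ p * (1 - Theta a t) :=
  (measurable_id.pow_const p).mul (measurable_const.sub (measurable_Theta a))

lemma integrableOn_Ioc_rpow_mul_one_sub_Theta_one (p : ℝ) :
    IntegrableOn (fun t => t ^ p * (1 - Theta 1 t)) (Ioc 0 1) := by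
  set n := ⌈-p⌉₊
  have hpn : 0 ≤ p + n := by linarith [Nat.le_ceil (-p)]
  refine Integrable.mono' (integrableOn_const (C := (4 * n ! * 4 ^ n : ℝ)) (by simp))
    (measurable_rpow_mul_one_sub_Theta p 1).aestronglyMeasurable
    ((ae_restrict_iff' measurableSet_Ioc).mpr (.of_forall fun t ht => ?_))
  obtain ⟨ht0, ht1⟩ := ht
  have hΘ := Theta_lt_one zero_le_one t
  rw [norm_of_nonneg (by positivity)]
  calc t ^ p * (1 - Theta 1 t) ≤ t ^ p * (4 * n ! * (4 * t) ^ n) := by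
        gcongr; exact one_sub_Theta_one_le n ht0 ht1
    _ = 4 * n ! * 4 ^ n * t ^ (p + n) := by rw [rpow_add_natCast ht0.ne']; ring
    _ ≤ 4 * n ! * 4 ^ n := mul_le_of_le_one_right (by positivity) (rpow_le_one ht0.le ht1 hpn)

lemma integrableOn_Ioi_rpow_mul_one_sub_Theta (hp : p < -1) (ha : 0 ≤ a) :
    IntegrableOn (fun t => t ^ p * (1 - Theta a t)) (Ioi 1) := by
  refine Integrable.mono' (integrableOn_Ioi_rpow_of_lt hp one_pos)
    (measurable_rpow_mul_one_sub_Theta p a).aestronglyMeasurable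
    ((ae_restrict_iff' measurableSet_Ioi).mpr (.of_forall fun t ht => ?_))
  have ht0 : 0 < t := one_pos.trans ht
  have hΘ := Theta_lt_one ha t
  rw [norm_of_nonneg (by positivity)]
  exact mul_le_of_le_one_right (by positivity) (by linarith [Theta_nonneg ha t])

lemma integrableOn_rpow_mul_one_sub_Theta_one (hp : p < -1) :
    IntegrableOn (fun t => t ^ p * (1 - Theta 1 t)) (Ioi 0) := by
  rw [← Ioc_union_Ioi_eq_Ioi zero_le_one]
  exact (integrableOn_Ioc_rpow_mul_one_sub_Theta_one p).union
    (integrableOn_Ioi_rpow_mul_one_sub_Theta hp zero_le_one)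

lemma integral_rpow_mul_one_sub_Theta_one_pos (hp : p < -1) :
    0 < ∫ t in Ioi 0, t ^ p * (1 - Theta 1 t) := by
  have hpos : ∀ t ∈ Ioi (0 : ℝ), 0 < t ^ p * (1 - Theta 1 t) := fun t ht =>
    mul_pos (rpow_pos_of_pos ht p) (sub_pos.mpr (Theta_lt_one zero_le_one t))
  rw [setIntegral_pos_iff_support_of_nonneg_ae
    ((ae_restrict_iff' measurableSet_Ioi).mpr (.of_forall fun t ht => (hpos t ht).le))
    (integrableOn_rpow_mul_one_sub_Theta_one hp)]
  have hsupp : Function.support (fun t => t ^ p * (1 - Theta 1 t)) ∩ Ioi 0 = Ioi 0 :=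
    inter_eq_right.mpr fun t ht => (hpos t ht).ne'
  rw [hsupp]
  simp

lemma integral_rpow_mul_one_sub_Theta (p : ℝ) (ha : 0 < a) :
    ∫ t in Ioi 0, t ^ p * (1 - Theta a t) =
      a ^ (2 * p + 2) * ∫ τ in Ioi 0, τ ^ p * (1 - Theta 1 τ) := by
  have hsubst := integral_comp_mul_left_Ioi (fun t => t ^ p * (1 - Theta a t)) 0 (pow_pos ha 2)
  have hscale : ∀ τ ∈ Ioi (0 : ℝ), (a ^ 2 * τ) ^ p * (1 - Theta a (a ^ 2 * τ)) =
      a ^ (2 * p) * (τ ^ p * (1 - Theta 1 τ)) := fun τ hτ => by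
    rw [← Theta_mul_mul_sq ha 1 τ, mul_one, mul_rpow (by positivity) (le_of_lt hτ),
      ← rpow_natCast_mul ha.le]
    push_cast; ring
  rw [mul_zero, setIntegral_congr_fun measurableSet_Ioi hscale, integral_const_mul,
    smul_eq_mul] at hsubst
  rw [rpow_add ha, rpow_two, mul_right_comm, hsubst]
  field_simp

theorem stmt_12_general (s : ℝ) (hs0 : 0 < s) :
    MeasureTheory.IntegrableOn
      (fun τ : ℝ => τ ^ (-1 - s / 2) * (1 - Theta 1 τ)) (Set.Ioi 0) ∧
    0 < (∫ τ in Set.Ioi (0 : ℝ), τ ^ (-1 - s / 2) * (1 - Theta 1 τ)) ∧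
    ∀ a : ℝ, 0 < a →
      (∫ t in Set.Ioi (0 : ℝ), t ^ (-1 - s / 2) * (1 - Theta a t)) =
        (∫ τ in Set.Ioi (0 : ℝ), τ ^ (-1 - s / 2) * (1 - Theta 1 τ)) * a ^ (-s) := by
  have hp : -1 - s / 2 < -1 := by linarith
  refine ⟨integrableOn_rpow_mul_one_sub_Theta_one hp,
    integral_rpow_mul_one_sub_Theta_one_pos hp, fun a ha => ?_⟩
  rw [integral_rpow_mul_one_sub_Theta _ ha, mul_comm]
  congr 2
  ring

/-- For `0 < s < 2`, the integral `I_s = ∫₀^∞ τ^{−1−s/2}(1 − Θ(1,τ)) dτ` is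
finite and strictly positive, and for every `a > 0`:
`∫₀^∞ t^{−1−s/2}(1 − Θ(a,t)) dt = I_s · a^{−s}`. -/
theorem stmt_12 (s : ℝ) (hs0 : 0 < s) (hs2 : s < 2) :
    MeasureTheory.IntegrableOn
      (fun τ : ℝ => τ ^ (-1 - s / 2) * (1 - Theta 1 τ)) (Set.Ioi 0) ∧
    0 < (∫ τ in Set.Ioi (0 : ℝ), τ ^ (-1 - s / 2) * (1 - Theta 1 τ)) ∧
    ∀ a : ℝ, 0 < a →
      (∫ t in Set.Ioi (0 : ℝ), t ^ (-1 - s / 2) * (1 - Theta a t)) =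
        (∫ τ in Set.Ioi (0 : ℝ), τ ^ (-1 - s / 2) * (1 - Theta 1 τ)) * a ^ (-s) :=
  stmt_12_general s hs0
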